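/- Let H be a Hopf algebra over a commutative ring k with bijective antipode assumption not required, and let A be a right H-comodule algebra with coaction a ↦ Σ a₍₀₎ ⊗ a₍₁₎. Suppose λ : H → A is a right H-colinear map (i.e. Σ λ(h)₍₀₎ ⊗ λ(h)₍₁₎ = Σ λ(h₍₁₎) ⊗ h₍₂₎) which is convolution invertible with convolution inverse λ̄. Then for every h ∈ H: Σ λ̄(h)₍₀₎ ⊗ λ̄(h)₍₁₎ = Σ λ̄(h₍₂₎) ⊗ S(h₍₁₎), where S is the antipode of H. -/

import Mathlib

open TensorProduct

noncomputable section

variable {k H A : Type*} [CommRing k] [Ring H] [HopfAlgebra k H] [Ring A] [Algebra k A]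

/-- Convolution product of two linear maps from a coalgebra to an algebra. -/
def convA (f g : H →ₗ[k] A) : H →ₗ[k] A :=
  LinearMap.mul' k A ∘ₗ TensorProduct.map f g ∘ₗ Coalgebra.comul

/-- The unit of the convolution algebra `Hom_k(H, A)`. -/
def convUnit : H →ₗ[k] A :=
  Algebra.linearMap k A ∘ₗ Coalgebra.counit

/-- `ρ : A → A ⊗ H` is a coassociative counital coaction. -/
def IsCoaction (ρ : A →ₐ[k] A ⊗[k] H) : Prop :=
  (∀ a : A, (TensorProduct.assoc k A H H) ((ρ.toLinearMap.rTensor H) (ρ a)) =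
      (Coalgebra.comul (R := k) (A := H)).lTensor A (ρ a)) ∧
  (∀ a : A, (TensorProduct.rid k A) ((Coalgebra.counit (R := k) (A := H)).lTensor A (ρ a)) = a)

/-- Right `H`-colinearity of a map `H → A` with respect to a coaction on `A` and the
regular coaction (the coproduct) on `H`. -/
def IsColinearMap (ρ : A →ₐ[k] A ⊗[k] H) (lam : H →ₗ[k] A) : Prop :=
  ρ.toLinearMap ∘ₗ lam = lam.rTensor H ∘ₗ Coalgebra.comul

open Coalgebra

section Gen
variable {B : Type*} [Ring B] [Algebra k B]

def conv' (f g : H →ₗ[k] B) : H →ₗ[k] B :=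
  LinearMap.mul' k B ∘ₗ TensorProduct.map f g ∘ₗ Coalgebra.comul

def convUnit' : H →ₗ[k] B := Algebra.linearMap k B ∘ₗ Coalgebra.counit

lemma conv'_apply (f g : H →ₗ[k] B) (x : H) {ι : Type*} (r : Coalgebra.Repr k x ι) :
    conv' f g x = ∑ i ∈ r.index, f (r.left i) * g (r.right i) := by
  simp [conv', ← r.eq, map_sum]

lemma convUnit'_conv (f : H →ₗ[k] B) : conv' convUnit' f = f := by
  ext x
  rw [conv'_apply _ _ _ (ℛ k x)]
  have := congrArg (LinearMap.mul' k B ∘ₗ TensorProduct.map (Algebra.linearMap k B) f)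
    (Coalgebra.sum_counit_tmul_eq (ℛ k x))
  simp only [map_sum, LinearMap.comp_apply, TensorProduct.map_tmul, LinearMap.mul'_apply,
    Algebra.linearMap_apply, map_one, one_mul] at this
  simpa only [convUnit', LinearMap.comp_apply, Algebra.linearMap_apply] using this

lemma conv_convUnit' (f : H →ₗ[k] B) : conv' f convUnit' = f := by
  ext x
  rw [conv'_apply _ _ _ (ℛ k x)]
  have := congrArg (LinearMap.mul' k B ∘ₗ TensorProduct.map f (Algebra.linearMap k B))
    (Coalgebra.sum_tmul_counit_eq (ℛ k x))
  simp only [map_sum, LinearMap.comp_apply, TensorProduct.map_tmul, LinearMap.mul'_apply,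
    Algebra.linearMap_apply, map_one, mul_one] at this
  simpa only [convUnit', LinearMap.comp_apply, Algebra.linearMap_apply] using this

lemma conv'_assoc (f g h : H →ₗ[k] B) : conv' (conv' f g) h = conv' f (conv' g h) := by
  ext x
  set r := ℛ k x with hr
  have T3 := Coalgebra.sum_tmul_tmul_eq r (fun i => ℛ k (r.left i)) (fun i => ℛ k (r.right i))
  have key := congrArg
    (LinearMap.mul' k B ∘ₗ TensorProduct.map f (LinearMap.mul' k B ∘ₗ TensorProduct.map g h)) T3
  simp only [map_sum, LinearMap.comp_apply, TensorProduct.map_tmul, LinearMap.mul'_apply] at key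
  rw [conv'_apply _ _ _ r, conv'_apply _ _ _ r]
  calc ∑ i ∈ r.index, conv' f g (r.left i) * h (r.right i)
      = ∑ i ∈ r.index, ∑ j ∈ (ℛ k (r.left i)).index,
          f ((ℛ k (r.left i)).left j) * ((g ((ℛ k (r.left i)).right j)) * h (r.right i)) := by
        refine Finset.sum_congr rfl fun i _ => ?_
        rw [conv'_apply _ _ _ (ℛ k (r.left i)), Finset.sum_mul]
        simp [mul_assoc]
    _ = ∑ i ∈ r.index, ∑ j ∈ (ℛ k (r.right i)).index,
          f (r.left i) * (g ((ℛ k (r.right i)).left j) * h ((ℛ k (r.right i)).right j)) := key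
    _ = ∑ i ∈ r.index, f (r.left i) * conv' g h (r.right i) := by
        refine Finset.sum_congr rfl fun i _ => ?_
        rw [conv'_apply _ _ _ (ℛ k (r.right i)), Finset.mul_sum]

end Gen


lemma rho_conv (ρ : A →ₐ[k] A ⊗[k] H) (f g : H →ₗ[k] A) :
    ρ.toLinearMap ∘ₗ convA f g = conv' (ρ.toLinearMap ∘ₗ f) (ρ.toLinearMap ∘ₗ g) := by
  ext x
  rw [LinearMap.comp_apply, show convA f g = conv' f g from rfl,
    conv'_apply _ _ _ (ℛ k x), conv'_apply _ _ _ (ℛ k x)]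
  simp [map_sum]

lemma rho_unit (ρ : A →ₐ[k] A ⊗[k] H) :
    ρ.toLinearMap ∘ₗ (convUnit (k := k) (H := H) (A := A)) = convUnit' := by
  ext x; simp [convUnit, convUnit', AlgHom.commutes]

lemma key_M (ρ : A →ₐ[k] A ⊗[k] H) (lam lamBar : H →ₗ[k] A)
    (hcolin : IsColinearMap ρ lam) (hinv₂ : convA lamBar lam = convUnit) (c : H) :
    conv' (((TensorProduct.mk k A H).flip 1) ∘ₗ lamBar) (ρ.toLinearMap ∘ₗ lam) c
      = 1 ⊗ₜ[k] c := by
  set r := ℛ k c with hrdef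
  have T3 := Coalgebra.sum_tmul_tmul_eq r (fun i => ℛ k (r.left i)) (fun i => ℛ k (r.right i))
  have key := congrArg (TensorProduct.map (LinearMap.mul' k A ∘ₗ TensorProduct.map lamBar lam)
      LinearMap.id ∘ₗ (TensorProduct.assoc k H H H).symm.toLinearMap) T3
  simp only [map_sum, LinearMap.comp_apply, LinearEquiv.coe_coe, TensorProduct.assoc_symm_tmul,
    TensorProduct.map_tmul, LinearMap.mul'_apply, LinearMap.id_coe, id_eq] at key
  have hcol : ∀ y : H, ρ (lam y) = lam.rTensor H (Coalgebra.comul y) :=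
    fun y => LinearMap.congr_fun hcolin y
  rw [conv'_apply _ _ _ r]
  calc ∑ i ∈ r.index, ((TensorProduct.mk k A H).flip 1 ∘ₗ lamBar) (r.left i) *
          (ρ.toLinearMap ∘ₗ lam) (r.right i)
      = ∑ i ∈ r.index, ∑ j ∈ (ℛ k (r.right i)).index,
          (lamBar (r.left i) * lam ((ℛ k (r.right i)).left j)) ⊗ₜ[k] (ℛ k (r.right i)).right j := by
        refine Finset.sum_congr rfl fun i _ => ?_
        rw [LinearMap.comp_apply, LinearMap.comp_apply, AlgHom.toLinearMap_apply, hcol,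
          ← (ℛ k (r.right i)).eq]
        simp [Finset.mul_sum, Algebra.TensorProduct.tmul_mul_tmul]
    _ = ∑ i ∈ r.index, ∑ j ∈ (ℛ k (r.left i)).index,
          (lamBar ((ℛ k (r.left i)).left j) * lam ((ℛ k (r.left i)).right j)) ⊗ₜ[k] r.right i :=
        key.symm
    _ = 1 ⊗ₜ[k] c := by
        have hstep : ∀ i ∈ r.index, ∑ j ∈ (ℛ k (r.left i)).index,
            (lamBar ((ℛ k (r.left i)).left j) * lam ((ℛ k (r.left i)).right j)) ⊗ₜ[k] r.right i
            = (1 : A) ⊗ₜ[k] (Coalgebra.counit (R := k) (r.left i) • r.right i) := by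
          intro i _
          rw [← TensorProduct.sum_tmul]
          have h1 : ∑ j ∈ (ℛ k (r.left i)).index,
              lamBar ((ℛ k (r.left i)).left j) * lam ((ℛ k (r.left i)).right j)
              = algebraMap k A (Coalgebra.counit (R := k) (r.left i)) := by
            have h2 := conv'_apply lamBar lam (r.left i) (ℛ k (r.left i))
            rw [show conv' lamBar lam = convA lamBar lam from rfl, hinv₂] at h2
            simpa [convUnit] using h2.symm
          rw [h1, Algebra.algebraMap_eq_smul_one, smul_tmul]
        rw [Finset.sum_congr rfl hstep, ← TensorProduct.tmul_sum]
        congr 1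
        have hc := congrArg (TensorProduct.lid k H) (Coalgebra.sum_counit_tmul_eq r)
        rw [map_sum] at hc
        simp only [TensorProduct.lid_tmul, one_smul] at hc
        exact hc

lemma key_GL (ρ : A →ₐ[k] A ⊗[k] H) (lam lamBar : H →ₗ[k] A)
    (hcolin : IsColinearMap ρ lam) (hinv₂ : convA lamBar lam = convUnit) :
    conv' ((TensorProduct.comm k H A).toLinearMap ∘ₗ
        TensorProduct.map (HopfAlgebra.antipode (R := k)) lamBar ∘ₗ Coalgebra.comul)
      (ρ.toLinearMap ∘ₗ lam) = convUnit' := by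
  ext x
  set r := ℛ k x with hrdef
  have T3 := Coalgebra.sum_tmul_tmul_eq r (fun i => ℛ k (r.left i)) (fun i => ℛ k (r.right i))
  have key := congrArg (LinearMap.mul' k (A ⊗[k] H) ∘ₗ
      TensorProduct.map ((TensorProduct.comm k H A).toLinearMap ∘ₗ
        TensorProduct.map (HopfAlgebra.antipode (R := k)) lamBar) (ρ.toLinearMap ∘ₗ lam) ∘ₗ
      (TensorProduct.assoc k H H H).symm.toLinearMap) T3
  simp only [map_sum, LinearMap.comp_apply, LinearEquiv.coe_coe, TensorProduct.assoc_symm_tmul,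
    TensorProduct.map_tmul, LinearMap.mul'_apply, TensorProduct.comm_tmul,
    AlgHom.toLinearMap_apply] at key
  rw [conv'_apply _ _ _ r]
  calc ∑ i ∈ r.index, ((TensorProduct.comm k H A).toLinearMap ∘ₗ
          TensorProduct.map (HopfAlgebra.antipode (R := k)) lamBar ∘ₗ Coalgebra.comul) (r.left i) *
          (ρ.toLinearMap ∘ₗ lam) (r.right i)
      = ∑ i ∈ r.index, ∑ j ∈ (ℛ k (r.left i)).index,
          (lamBar ((ℛ k (r.left i)).right j) ⊗ₜ[k]
            HopfAlgebra.antipode (R := k) ((ℛ k (r.left i)).left j)) * ρ (lam (r.right i)) := by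
        refine Finset.sum_congr rfl fun i _ => ?_
        rw [LinearMap.comp_apply, LinearMap.comp_apply, LinearMap.comp_apply,
          ← (ℛ k (r.left i)).eq]
        simp [map_sum, Finset.sum_mul]
    _ = ∑ i ∈ r.index, ∑ j ∈ (ℛ k (r.right i)).index,
          (lamBar ((ℛ k (r.right i)).left j) ⊗ₜ[k]
            HopfAlgebra.antipode (R := k) (r.left i)) * ρ (lam ((ℛ k (r.right i)).right j)) :=
        key
    _ = ∑ i ∈ r.index, (1 : A) ⊗ₜ[k] (HopfAlgebra.antipode (R := k) (r.left i) * r.right i) := by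
        refine Finset.sum_congr rfl fun i _ => ?_
        have hM := key_M ρ lam lamBar hcolin hinv₂ (r.right i)
        rw [conv'_apply _ _ _ (ℛ k (r.right i))] at hM
        calc ∑ j ∈ (ℛ k (r.right i)).index,
              (lamBar ((ℛ k (r.right i)).left j) ⊗ₜ[k]
                HopfAlgebra.antipode (R := k) (r.left i)) * ρ (lam ((ℛ k (r.right i)).right j))
            = ((1 : A) ⊗ₜ[k] HopfAlgebra.antipode (R := k) (r.left i)) *
                ∑ j ∈ (ℛ k (r.right i)).index,
                  ((TensorProduct.mk k A H).flip 1 ∘ₗ lamBar) ((ℛ k (r.right i)).left j) *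
                    (ρ.toLinearMap ∘ₗ lam) ((ℛ k (r.right i)).right j) := by
              rw [Finset.mul_sum]
              refine Finset.sum_congr rfl fun j _ => ?_
              rw [← mul_assoc]
              simp [Algebra.TensorProduct.tmul_mul_tmul]
          _ = ((1 : A) ⊗ₜ[k] HopfAlgebra.antipode (R := k) (r.left i)) * ((1 : A) ⊗ₜ[k] r.right i) := by
              rw [hM]
          _ = (1 : A) ⊗ₜ[k] (HopfAlgebra.antipode (R := k) (r.left i) * r.right i) := by
              rw [Algebra.TensorProduct.tmul_mul_tmul, one_mul]
    _ = convUnit' x := by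
        rw [← TensorProduct.tmul_sum, HopfAlgebra.sum_antipode_mul_eq_algebraMap_counit r]
        simp only [convUnit', LinearMap.comp_apply, Algebra.linearMap_apply,
          Algebra.TensorProduct.algebraMap_apply]
        rw [Algebra.algebraMap_eq_smul_one, Algebra.algebraMap_eq_smul_one, smul_tmul]

theorem stmt_8 (ρ : A →ₐ[k] A ⊗[k] H) (hρ : IsCoaction ρ)
    (lam lamBar : H →ₗ[k] A)
    (hcolin : IsColinearMap ρ lam)
    (hinv₁ : convA lam lamBar = convUnit) (hinv₂ : convA lamBar lam = convUnit) :
    -- `∑ λ̄(h)₍₀₎ ⊗ λ̄(h)₍₁₎ = ∑ λ̄(h₍₂₎) ⊗ S(h₍₁₎)`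
    ρ.toLinearMap ∘ₗ lamBar =
      (TensorProduct.comm k H A).toLinearMap ∘ₗ
        TensorProduct.map (HopfAlgebra.antipode (R := k)) lamBar ∘ₗ Coalgebra.comul := by
  have h1 : conv' (ρ.toLinearMap ∘ₗ lam) (ρ.toLinearMap ∘ₗ lamBar) = convUnit' := by
    rw [← rho_conv, hinv₁, rho_unit]
  have h2 := key_GL ρ lam lamBar hcolin hinv₂
  set G := (TensorProduct.comm k H A).toLinearMap ∘ₗ
      TensorProduct.map (HopfAlgebra.antipode (R := k)) lamBar ∘ₗ Coalgebra.comul with hG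
  calc ρ.toLinearMap ∘ₗ lamBar
      = conv' convUnit' (ρ.toLinearMap ∘ₗ lamBar) := (convUnit'_conv _).symm
    _ = conv' (conv' G (ρ.toLinearMap ∘ₗ lam)) (ρ.toLinearMap ∘ₗ lamBar) := by rw [h2]
    _ = conv' G (conv' (ρ.toLinearMap ∘ₗ lam) (ρ.toLinearMap ∘ₗ lamBar)) := conv'_assoc _ _ _
    _ = conv' G convUnit' := by rw [h1]
    _ = G := conv_convUnit' G
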